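/- arXiv:1010.1372 — 3 statements merged into one kernel-verified Lean document; each statement's English description precedes it below -/
import Mathlib

section
/- For each t = 0, 1, …, T there exists a function ũ_t : ℝ × 𝒫(ℝ) × {E, H} → ℝ such that, almost surely, u_t(S_0, …, S_t, d) = ũ_t(S_t, π_t, d) for both decisions d ∈ {E, H}. Consequently, the optimal value u*_t(S_0, …, S_t) = max(u_t(S_0,…,S_t,E), u_t(S_0,…,S_t,H)) almost surely equals ũ*_t(S_t, π_t) := max(ũ_t(S_t, π_t, E), ũ_t(S_t, π_t, H)); that is, the value and optimal decision at time t depend on the observed price history only through the current price S_t and the filtering distribution π_t. -/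
/-!
The filter obeys a recursion driven by a single kernel. Given the observed prices up to time `t`,
the pair `(S_{t+1}, Y_{t+1})` has conditional law `ρ (S_t, π_t)`, where
`ρ (x, m) = ∫ κ (x, y) ∂m y` (tower property plus the Markov property); and disintegrating
`ρ (x, m)` along its first coordinate gives, by Bayes' rule, `π_{t+1} = Φ ((S_t, π_t), S_{t+1})`.
So if the holding value at `t + 1` is `v (S_{t+1}, π_{t+1})`, the one at `t` is
`E[max (g S_{t+1}) (v (S_{t+1}, Φ ((S_t, π_t), S_{t+1}))) | S_0, …, S_t]
  = ∫ max (g s) (v (s, Φ ((S_t, π_t), s))) ∂ρ (S_t, π_t) (s, y)`,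
again a function of `(S_t, π_t)`; backward induction from `u_T (·, H) = 0` concludes.
-/

open MeasureTheory ProbabilityTheory

namespace ProbabilityTheory

section KernelAeEq

variable {α β Ω : Type*} {mα : MeasurableSpace α} {mβ : MeasurableSpace β}
  {mΩ : MeasurableSpace Ω} [MeasurableSpace.CountablyGenerated β] {κ η : Kernel α β}
  [IsFiniteKernel κ] [IsFiniteKernel η]

lemma Kernel.ae_eq_of_forall_measurableSet {μ : Measure α} [IsFiniteMeasure μ]
    (h : ∀ s, MeasurableSet s → ∀ᵐ a ∂μ, κ a s = η a s) : κ =ᵐ[μ] η := by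
  refine Kernel.ae_eq_of_compProd_eq (Measure.ext_prod fun {A s} hA hs => ?_)
  rw [Measure.compProd_apply_prod hA hs, Measure.compProd_apply_prod hA hs]
  exact setLIntegral_congr_fun_ae hA ((h s hs).mono fun a ha _ => ha)

lemma Kernel.ae_eq_map_of_forall_measurableSet {μ : Measure Ω} [IsFiniteMeasure μ] {X : Ω → α}
    (hX : Measurable X) (h : ∀ s, MeasurableSet s → ∀ᵐ ω ∂μ, κ (X ω) s = η (X ω) s) :
    κ =ᵐ[μ.map X] η :=
  Kernel.ae_eq_of_forall_measurableSet fun s hs => (ae_map_iff hX.aemeasurable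
    (measurableSet_eq_fun (κ.measurable_coe hs) (η.measurable_coe hs))).2 (h s hs)

end KernelAeEq

lemma Kernel.isCondKernel_comap {α β γ Ω : Type*} {mα : MeasurableSpace α}
    {mβ : MeasurableSpace β} {mγ : MeasurableSpace γ} {mΩ : MeasurableSpace Ω}
    {κ : Kernel α (β × Ω)} {κCond : Kernel (α × β) Ω}
    [IsSFiniteKernel κ] [IsSFiniteKernel κCond] [κ.IsCondKernel κCond] {f : γ → α}
    (hf : Measurable f) :
    (κ.comap f hf).IsCondKernel (κCond.comap (Prod.map f id) (hf.prodMap measurable_id)) where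
  disintegrate := by
    ext c s hs
    rw [Kernel.compProd_apply hs]
    conv_rhs => rw [Kernel.comap_apply, ← κ.disintegrate κCond, Kernel.compProd_apply hs]
    rfl

variable {Ω α β γ E : Type*} [MeasurableSpace α] [MeasurableSpace β] [MeasurableSpace γ]
  [MeasurableSpace E]

section History

def history (X : ℕ → Ω → α) (t : ℕ) (ω : Ω) : Fin (t + 1) → α := fun i => X i ω

lemma comap_history (X : ℕ → Ω → α) (t : ℕ) :
    MeasurableSpace.comap (history X t) inferInstance
      = ⨆ i ∈ Finset.range (t + 1), MeasurableSpace.comap (X i) inferInstance := by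
  simp_rw [MeasurableSpace.pi, MeasurableSpace.comap_iSup, MeasurableSpace.comap_comp]
  apply le_antisymm
  · exact iSup_le fun i => le_iSup₂_of_le (i : ℕ) (Finset.mem_range.2 i.isLt) le_rfl
  · exact iSup₂_le fun i hi => le_iSup_of_le (⟨i, Finset.mem_range.1 hi⟩ : Fin (t + 1)) le_rfl

lemma comap_history_succ (X : ℕ → Ω → α) (t : ℕ) :
    MeasurableSpace.comap (history X (t + 1)) inferInstance
      = MeasurableSpace.comap (fun ω => (history X t ω, X (t + 1) ω)) inferInstance := by
  rw [comap_history, Finset.range_add_one, Finset.iSup_insert, sup_comm, ← comap_history]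
  exact (MeasurableSpace.comap_prodMk _ _).symm

lemma comap_history_le_comap_history_prod (X : ℕ → Ω → α) (Z : ℕ → Ω → β) (t : ℕ) :
    MeasurableSpace.comap (history X t) inferInstance
      ≤ MeasurableSpace.comap (history (fun i ω => (X i ω, Z i ω)) t) inferInstance := by
  rw [show history X t = (fun h i => (h i).1) ∘ history (fun i ω => (X i ω, Z i ω)) t from rfl,
    ← MeasurableSpace.comap_comp]
  exact MeasurableSpace.comap_mono (measurable_pi_lambda _ fun i =>
    measurable_fst.comp (measurable_pi_apply i)).comap_le

variable [MeasurableSpace Ω]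

lemma measurable_history {X : ℕ → Ω → α} (hX : ∀ t, Measurable (X t)) (t : ℕ) :
    Measurable (history X t) :=
  measurable_pi_lambda _ fun i => hX i

end History

variable [MeasurableSpace Ω]

lemma condDistrib_ae_eq_of_isCondKernel [StandardBorelSpace γ] [Nonempty γ] [StandardBorelSpace E]
    [Nonempty E] {μ : Measure Ω} [IsFiniteMeasure μ] {X : Ω → β} {V : Ω → γ} {Y : Ω → E}
    (hX : Measurable X) (hV : Measurable V) (hY : Measurable Y)
    {η : Kernel β (γ × E)} [IsFiniteKernel η] {Ψ : Kernel (β × γ) E} [IsFiniteKernel Ψ]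
    [η.IsCondKernel Ψ]
    (h : condDistrib (fun ω => (V ω, Y ω)) X μ =ᵐ[μ.map X] η) :
    condDistrib Y (fun ω => (X ω, V ω)) μ =ᵐ[μ.map fun ω => (X ω, V ω)] Ψ := by
  have hjoint := (condDistrib_ae_eq_iff_measure_eq_compProd X (hV.prodMk hY).aemeasurable η).1 h
  refine condDistrib_ae_eq_of_measure_eq_compProd _ hY.aemeasurable ?_
  have hXV : μ.map (fun ω => (X ω, V ω)) = μ.map X ⊗ₘ η.fst := by
    rw [Kernel.fst_eq, Measure.compProd_map measurable_fst, ← hjoint,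
      Measure.map_map (by fun_prop) (by fun_prop)]
    rfl
  rw [hXV, ← Measure.compProd_assoc, Kernel.disintegrate, ← hjoint,
    Measure.map_map (by fun_prop) (by fun_prop)]
  rfl

noncomputable def Kernel.ofProbabilityMeasure : Kernel (ProbabilityMeasure β) β :=
  ⟨(↑), measurable_subtype_coe⟩

instance : IsMarkovKernel (Kernel.ofProbabilityMeasure (β := β)) := ⟨fun m => m.2⟩

structure IsCondLaw (μ : Measure Ω) (π : Ω → ProbabilityMeasure E) (Y : Ω → E) (X : Ω → β) :
    Prop where
  measurable : Measurable π
  real_ae_eq_condExp : ∀ s, MeasurableSet s →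
    (fun ω => (π ω : Measure E).real s) =ᵐ[μ] μ⟦Y ⁻¹' s | MeasurableSpace.comap X inferInstance⟧

namespace IsCondLaw

variable {μ : Measure Ω} {π : Ω → ProbabilityMeasure E} {Y : Ω → E} {X : Ω → β}

lemma of_comap_eq {X' : Ω → γ} (h : IsCondLaw μ π Y X)
    (hX : MeasurableSpace.comap X inferInstance = MeasurableSpace.comap X' inferInstance) :
    IsCondLaw μ π Y X' :=
  ⟨h.measurable, fun s hs => hX ▸ h.real_ae_eq_condExp s hs⟩

lemma of_condExp_eq_integral (hπ : Measurable π)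
    (h : ∀ f : E → ℝ, Measurable f → (∃ C, ∀ p, |f p| ≤ C) →
      μ[fun ω => f (Y ω) | MeasurableSpace.comap X inferInstance]
        =ᵐ[μ] fun ω => ∫ p, f p ∂(π ω : Measure E)) :
    IsCondLaw μ π Y X := by
  refine ⟨hπ, fun s hs => ((h (s.indicator fun _ => 1) (measurable_const.indicator hs)
    ⟨1, fun p => ?_⟩).trans (ae_of_all _ fun ω => integral_indicator_one hs)).symm⟩
  by_cases hp : p ∈ s <;> simp [hp]

lemma ae_eq_condDistrib [IsFiniteMeasure μ] [StandardBorelSpace E] [Nonempty E]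
    (h : IsCondLaw μ π Y X) (hX : Measurable X) (hY : Measurable Y) :
    ∀ᵐ ω ∂μ, (π ω : Measure E) = condDistrib Y X μ (X ω) := by
  refine Kernel.ae_eq_of_forall_measurableSet (μ := μ)
    (κ := Kernel.ofProbabilityMeasure.comap π h.measurable)
    (η := (condDistrib Y X μ).comap X hX) fun s hs => ?_
  filter_upwards [h.real_ae_eq_condExp s hs, condDistrib_ae_eq_condExp hX hY hs] with ω hπ hcd
  exact (measureReal_eq_measureReal_iff).1 (hπ.trans hcd.symm)

end IsCondLaw

/-- `(x, m) ↦ ∫ κ (x, y) ∂m y`: the law of the next state when the observed coordinate is `x`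
and the hidden one has law `m`. -/
noncomputable def predictiveKernel (κ : Kernel (α × β) γ) : Kernel (α × ProbabilityMeasure β) γ :=
  κ ∘ₖ (Kernel.id ∥ₖ Kernel.ofProbabilityMeasure)

instance (κ : Kernel (α × β) γ) [IsMarkovKernel κ] : IsMarkovKernel (predictiveKernel κ) := by
  unfold predictiveKernel; infer_instance

lemma predictiveKernel_apply' (κ : Kernel (α × β) γ) [IsSFiniteKernel κ]
    (z : α × ProbabilityMeasure β) {s : Set γ} (hs : MeasurableSet s) :
    predictiveKernel κ z s = ∫⁻ y, κ (z.1, y) s ∂z.2 := by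
  rw [predictiveKernel, Kernel.comp_apply' _ _ _ hs, Kernel.parallelComp_apply, Kernel.id_apply,
    lintegral_prod _ (κ.measurable_coe hs).aemeasurable,
    lintegral_dirac' _ (κ.measurable_coe hs).lintegral_prod_right']
  rfl

lemma predictiveKernel_real (κ : Kernel (α × β) γ) [IsFiniteKernel κ]
    (z : α × ProbabilityMeasure β) {s : Set γ} (hs : MeasurableSet s) :
    (predictiveKernel κ z).real s = ∫ y, (κ (z.1, y)).real s ∂z.2 := by
  simp_rw [measureReal_def]
  rw [predictiveKernel_apply' κ z hs, integral_toReal]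
  · exact ((κ.measurable_coe hs).comp measurable_prodMk_left).aemeasurable
  · exact ae_of_all _ fun y => measure_lt_top _ _

/-- Bayes' rule: the law of the next hidden coordinate given the next observed one. -/
noncomputable def filterUpdate [StandardBorelSpace α] [StandardBorelSpace β] [Nonempty β]
    (κ : Kernel (α × β) (α × β)) [IsMarkovKernel κ]
    (q : (α × ProbabilityMeasure β) × α) : ProbabilityMeasure β :=
  ⟨(predictiveKernel κ).condKernel q, inferInstance⟩

lemma measurable_filterUpdate [StandardBorelSpace α] [StandardBorelSpace β] [Nonempty β]
    (κ : Kernel (α × β) (α × β)) [IsMarkovKernel κ] : Measurable (filterUpdate κ) :=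
  (Kernel.measurable _).subtype_mk

noncomputable def filterState [StandardBorelSpace β] [Nonempty β] (μ : Measure Ω)
    [IsFiniteMeasure μ] (S : ℕ → Ω → α) (Y : ℕ → Ω → β) (t : ℕ) (h : Fin (t + 1) → α) :
    α × ProbabilityMeasure β :=
  (h (Fin.last t), ⟨condDistrib (Y t) (history S t) μ h, inferInstance⟩)

section FilterState

variable [StandardBorelSpace β] [Nonempty β]
  {μ : Measure Ω} [IsFiniteMeasure μ] {S : ℕ → Ω → α} {Y : ℕ → Ω → β}
  {κ : Kernel (α × β) (α × β)} [IsMarkovKernel κ] {π : ℕ → Ω → ProbabilityMeasure β}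

lemma measurable_filterState (t : ℕ) : Measurable (filterState μ S Y t) :=
  (measurable_pi_apply _).prodMk (Kernel.measurable _).subtype_mk

lemma filterState_history_ae_eq {t : ℕ} (hS : ∀ t, Measurable (S t)) (hY : ∀ t, Measurable (Y t))
    (hπ : IsCondLaw μ (π t) (Y t) (history S t)) :
    ∀ᵐ ω ∂μ, filterState μ S Y t (history S t ω) = (S t ω, π t ω) := by
  filter_upwards [hπ.ae_eq_condDistrib (measurable_history hS t) (hY t)] with ω hω
  exact Prod.ext rfl (Subtype.ext hω.symm)

variable [StandardBorelSpace α] [Nonempty α]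

lemma condDistrib_ae_eq_predictiveKernel {t : ℕ} (hS : ∀ t, Measurable (S t))
    (hY : ∀ t, Measurable (Y t))
    (hκ : IsCondLaw μ (fun ω => ⟨κ (S t ω, Y t ω), inferInstance⟩)
      (fun ω => (S (t + 1) ω, Y (t + 1) ω)) (history (fun i ω => (S i ω, Y i ω)) t)) :
    condDistrib (fun ω => (S (t + 1) ω, Y (t + 1) ω)) (history S t) μ
      =ᵐ[μ.map (history S t)]
        (predictiveKernel κ).comap (filterState μ S Y t) (measurable_filterState t) := by
  refine Kernel.ae_eq_map_of_forall_measurableSet (measurable_history hS t) fun s hs => ?_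
  have hSY : ∀ t, Measurable fun ω => (S t ω, Y t ω) := fun t => (hS t).prodMk (hY t)
  have hκs : Measurable fun p : (Fin (t + 1) → α) × β => (κ (p.1 (Fin.last t), p.2)).real s :=
    (κ.measurable_coe hs).ennreal_toReal.comp
      (((measurable_pi_apply _).comp measurable_fst).prodMk measurable_snd)
  have hcondExp := condExp_prod_ae_eq_integral_condDistrib (μ := μ)
    (measurable_history hS t) (hY t).aemeasurable hκs.stronglyMeasurable (Integrable.of_bound
      (hκs.comp ((measurable_history hS t).prodMk (hY t))).aestronglyMeasurable 1
      (ae_of_all _ fun ω => by simp [abs_of_nonneg, measureReal_le_one]))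
  -- tower property, Markov property, then integrate out `Y t` against its conditional law
  filter_upwards [condDistrib_ae_eq_condExp (μ := μ) (measurable_history hS t) (hSY (t + 1)) hs,
    (condExp_condExp_of_le
      (f := ((fun ω => (S (t + 1) ω, Y (t + 1) ω)) ⁻¹' s).indicator fun _ => (1 : ℝ))
      (comap_history_le_comap_history_prod S Y t) (measurable_history hSY t).comap_le).symm,
    condExp_congr_ae (m := MeasurableSpace.comap (history S t) inferInstance)
      (hκ.real_ae_eq_condExp s hs), hcondExp] with ω h₁ h₂ h₃ h₄
  rw [← measureReal_eq_measureReal_iff, Kernel.comap_apply, predictiveKernel_real κ _ hs]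
  exact h₁.trans (h₂.trans (h₃.symm.trans h₄))

lemma filter_succ_ae_eq_filterUpdate {t : ℕ} (hS : ∀ t, Measurable (S t))
    (hY : ∀ t, Measurable (Y t))
    (hκ : IsCondLaw μ (fun ω => ⟨κ (S t ω, Y t ω), inferInstance⟩)
      (fun ω => (S (t + 1) ω, Y (t + 1) ω)) (history (fun i ω => (S i ω, Y i ω)) t))
    (hπ : IsCondLaw μ (π t) (Y t) (history S t))
    (hπ' : IsCondLaw μ (π (t + 1)) (Y (t + 1)) (history S (t + 1))) :
    ∀ᵐ ω ∂μ, π (t + 1) ω = filterUpdate κ ((S t ω, π t ω), S (t + 1) ω) := by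
  have hφ := measurable_filterState (μ := μ) (S := S) (Y := Y) t
  have := Kernel.isCondKernel_comap (κ := predictiveKernel κ)
    (κCond := (predictiveKernel κ).condKernel) hφ
  have hBayes := condDistrib_ae_eq_of_isCondKernel (measurable_history hS t) (hS (t + 1))
    (hY (t + 1)) (Ψ := (predictiveKernel κ).condKernel.comap _ (hφ.prodMap measurable_id))
    (condDistrib_ae_eq_predictiveKernel hS hY hκ)
  filter_upwards [(hπ'.of_comap_eq (comap_history_succ S t)).ae_eq_condDistrib
      ((measurable_history hS t).prodMk (hS (t + 1))) (hY (t + 1)),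
    ae_of_ae_map ((measurable_history hS t).prodMk (hS (t + 1))).aemeasurable hBayes,
    filterState_history_ae_eq hS hY hπ] with ω h₁ h₂ h₃
  refine Subtype.ext (h₁.trans (h₂.trans ?_))
  rw [Kernel.comap_apply, Prod.map_apply, id, h₃]
  rfl

end FilterState

section DynamicProgramming

variable [StandardBorelSpace α] [StandardBorelSpace β] [Nonempty β]
  (κ : Kernel (α × β) (α × β)) [IsMarkovKernel κ] (g : α → ℝ)

noncomputable def bellman (v : α × ProbabilityMeasure β → ℝ) (z : α × ProbabilityMeasure β) : ℝ :=
  ∫ w, max (g w.1) (v (w.1, filterUpdate κ (z, w.1))) ∂predictiveKernel κ z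

/-- `holdValue κ g n` is the value of holding with `n` periods left to maturity. -/
noncomputable def holdValue : ℕ → α × ProbabilityMeasure β → ℝ
  | 0 => 0
  | n + 1 => bellman κ g (holdValue n)

variable {κ g}

lemma measurable_bellman_integrand (hg : Measurable g) {v : α × ProbabilityMeasure β → ℝ}
    (hv : Measurable v) :
    Measurable fun q : (α × ProbabilityMeasure β) × α => max (g q.2) (v (q.2, filterUpdate κ q)) :=
  (hg.comp measurable_snd).max (hv.comp (measurable_snd.prodMk (measurable_filterUpdate κ)))

lemma measurable_bellman (hg : Measurable g) {v : α × ProbabilityMeasure β → ℝ}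
    (hv : Measurable v) : Measurable (bellman κ g v) :=
  ((measurable_bellman_integrand hg hv).comp (measurable_fst.prodMk
    (measurable_fst.comp measurable_snd))).stronglyMeasurable.integral_kernel_prod_right'.measurable

lemma abs_bellman_le {C : ℝ} (hg : ∀ x, |g x| ≤ C) {v : α × ProbabilityMeasure β → ℝ}
    (hv : ∀ z, |v z| ≤ C) (z : α × ProbabilityMeasure β) : |bellman κ g v z| ≤ C := by
  rw [← Real.norm_eq_abs]
  calc ‖bellman κ g v z‖ ≤ C * (predictiveKernel κ z).real Set.univ :=
        norm_integral_le_of_norm_le_const (ae_of_all _ fun w =>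
          (abs_max_le_max_abs_abs).trans (max_le (hg _) (hv _)))
    _ = C := by simp

lemma measurable_holdValue (hg : Measurable g) (n : ℕ) : Measurable (holdValue κ g n) := by
  induction n with
  | zero => exact measurable_const
  | succ n ih => exact measurable_bellman hg ih

lemma abs_holdValue_le {C : ℝ} (hC : 0 ≤ C) (hg : ∀ x, |g x| ≤ C) (n : ℕ)
    (z : α × ProbabilityMeasure β) : |holdValue κ g n z| ≤ C := by
  induction n generalizing z with
  | zero => simpa [holdValue] using hC
  | succ n ih => exact abs_bellman_le hg ih z

end DynamicProgramming

section ValueFunction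

variable [StandardBorelSpace α] [Nonempty α] [StandardBorelSpace β] [Nonempty β]
  {μ : Measure Ω} [IsFiniteMeasure μ] {S : ℕ → Ω → α} {Y : ℕ → Ω → β}
  {κ : Kernel (α × β) (α × β)} [IsMarkovKernel κ] {π : ℕ → Ω → ProbabilityMeasure β}
  {g : α → ℝ} {C : ℝ}

lemma condExp_ae_eq_bellman {t : ℕ} (hS : ∀ t, Measurable (S t)) (hY : ∀ t, Measurable (Y t))
    (hκ : IsCondLaw μ (fun ω => ⟨κ (S t ω, Y t ω), inferInstance⟩)
      (fun ω => (S (t + 1) ω, Y (t + 1) ω)) (history (fun i ω => (S i ω, Y i ω)) t))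
    (hπ : IsCondLaw μ (π t) (Y t) (history S t))
    (hπ' : IsCondLaw μ (π (t + 1)) (Y (t + 1)) (history S (t + 1)))
    (hg : Measurable g) (hgC : ∀ x, |g x| ≤ C) {v : α × ProbabilityMeasure β → ℝ}
    (hv : Measurable v) (hvC : ∀ z, |v z| ≤ C) :
    μ[fun ω => max (g (S (t + 1) ω)) (v (S (t + 1) ω, π (t + 1) ω)) |
        MeasurableSpace.comap (history S t) inferInstance]
      =ᵐ[μ] fun ω => bellman κ g v (S t ω, π t ω) := by
  have hF : Measurable fun p : (Fin (t + 1) → α) × (α × β) =>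
      max (g p.2.1) (v (p.2.1, filterUpdate κ (filterState μ S Y t p.1, p.2.1))) :=
    (measurable_bellman_integrand hg hv).comp
      (((measurable_filterState t).comp measurable_fst).prodMk (measurable_fst.comp measurable_snd))
  have hW : Measurable fun ω => (S (t + 1) ω, Y (t + 1) ω) := (hS (t + 1)).prodMk (hY (t + 1))
  have hstate := filterState_history_ae_eq hS hY hπ
  have hintegrand : (fun ω => max (g (S (t + 1) ω)) (v (S (t + 1) ω, π (t + 1) ω)))
      =ᵐ[μ] fun ω => max (g (S (t + 1) ω)) (v (S (t + 1) ω,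
        filterUpdate κ (filterState μ S Y t (history S t ω), S (t + 1) ω))) := by
    filter_upwards [filter_succ_ae_eq_filterUpdate hS hY hκ hπ hπ', hstate] with ω h₁ h₂
    rw [h₁, h₂]
  have hcond := condExp_prod_ae_eq_integral_condDistrib (μ := μ) (measurable_history hS t)
    hW.aemeasurable hF.stronglyMeasurable (Integrable.of_bound
      (hF.comp ((measurable_history hS t).prodMk hW)).aestronglyMeasurable C
      (ae_of_all _ fun ω => (abs_max_le_max_abs_abs).trans (max_le (hgC _) (hvC _))))
  filter_upwards [condExp_congr_ae hintegrand, hcond, hstate, ae_of_ae_map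
    (measurable_history hS t).aemeasurable (condDistrib_ae_eq_predictiveKernel hS hY hκ)]
    with ω h₁ h₂ h₃ h₄
  rw [h₁, h₂, h₄, Kernel.comap_apply, h₃]
  rfl

theorem ae_eq_holdValue {T : ℕ} (hS : ∀ t, Measurable (S t)) (hY : ∀ t, Measurable (Y t))
    (hκ : ∀ t < T, IsCondLaw μ (fun ω => ⟨κ (S t ω, Y t ω), inferInstance⟩)
      (fun ω => (S (t + 1) ω, Y (t + 1) ω)) (history (fun i ω => (S i ω, Y i ω)) t))
    (hπ : ∀ t, IsCondLaw μ (π t) (Y t) (history S t))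
    (hg : Measurable g) (hgC : ∀ x, |g x| ≤ C) {w : ℕ → Ω → ℝ} (hwT : w T =ᵐ[μ] 0)
    (hw : ∀ t < T, w t =ᵐ[μ] μ[fun ω => max (g (S (t + 1) ω)) (w (t + 1) ω) |
      MeasurableSpace.comap (history S t) inferInstance]) :
    ∀ t ≤ T, w t =ᵐ[μ] fun ω => holdValue κ g (T - t) (S t ω, π t ω) := by
  have hC : 0 ≤ C := (abs_nonneg _).trans (hgC (Classical.arbitrary α))
  intro t ht
  suffices ∀ n t, t + n = T → w t =ᵐ[μ] fun ω => holdValue κ g n (S t ω, π t ω) from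
    this _ t (Nat.add_sub_cancel' ht)
  intro n
  induction n with
  | zero => rintro t rfl; exact hwT
  | succ n ih =>
    intro t htn
    refine (hw t (by omega)).trans ((condExp_congr_ae ?_).trans (condExp_ae_eq_bellman hS hY
      (hκ t (by omega)) (hπ t) (hπ (t + 1)) hg hgC (measurable_holdValue hg n)
      (abs_holdValue_le hC hgC n)))
    filter_upwards [ih (t + 1) (by omega)] with ω h
    rw [h]

end ValueFunction

end ProbabilityTheory

open ProbabilityTheory

theorem value_function_factors_through_filter_general
    {Ω : Type*} [MeasurableSpace Ω] (μ : Measure Ω) [IsProbabilityMeasure μ]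
    (T : ℕ)
    (S Y : ℕ → Ω → ℝ) (hS : ∀ t, Measurable (S t)) (hY : ∀ t, Measurable (Y t))
    (κ : ℝ × ℝ → Measure (ℝ × ℝ)) (hκmeas : Measurable κ)
    (hκprob : ∀ p, IsProbabilityMeasure (κ p))
    -- `(S_t, Y_t)` is a time-homogeneous Markov chain with transition kernel `κ`
    (hMarkov : ∀ t, t < T → ∀ f : ℝ × ℝ → ℝ, Measurable f → (∃ C, ∀ p, |f p| ≤ C) →
      μ[(fun ω => f (S (t + 1) ω, Y (t + 1) ω)) |
          ⨆ i ∈ Finset.range (t + 1),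
            MeasurableSpace.comap (fun ω => (S i ω, Y i ω)) inferInstance]
        =ᵐ[μ] fun ω => ∫ p, f p ∂(κ (S t ω, Y t ω)))
    -- `π_t` is a regular version of the conditional law of `Y_t` given `σ(S_0, …, S_t)`
    (π : ℕ → Ω → Measure ℝ) (hπprob : ∀ t ω, IsProbabilityMeasure (π t ω))
    (hπmeas : ∀ t, Measurable[⨆ i ∈ Finset.range (t + 1),
        MeasurableSpace.comap (S i) inferInstance] (π t))
    (hπ : ∀ t, ∀ A : Set ℝ, MeasurableSet A →
      (fun ω => (π t ω A).toReal) =ᵐ[μ]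
        μ[Set.indicator {ω | Y t ω ∈ A} (fun _ => (1 : ℝ)) |
          ⨆ i ∈ Finset.range (t + 1), MeasurableSpace.comap (S i) inferInstance])
    -- bounded measurable payoff
    (g : ℝ → ℝ) (hg : Measurable g) (hgbdd : ∃ C, ∀ x, |g x| ≤ C)
    -- the dynamic programming value functions; `u t s d` depends only on `s 0, …, s t`
    (u : ℕ → (ℕ → ℝ) → Bool → ℝ)
    (huTE : ∀ s, u T s true = g (s T))
    (huTH : ∀ s, u T s false = 0)
    (huE : ∀ t, t < T → ∀ s, u t s true = g (s t))
    (huH : ∀ t, t < T →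
      (fun ω => u t (fun i => S i ω) false) =ᵐ[μ]
        μ[(fun ω => max (u (t + 1) (fun i => S i ω) true)
            (u (t + 1) (fun i => S i ω) false)) |
          ⨆ i ∈ Finset.range (t + 1), MeasurableSpace.comap (S i) inferInstance]) :
    ∀ t, t ≤ T → ∃ utilde : ℝ → Measure ℝ → Bool → ℝ,
      (∀ d : Bool,
        (fun ω => u t (fun i => S i ω) d) =ᵐ[μ] fun ω => utilde (S t ω) (π t ω) d) ∧
      ((fun ω => max (u t (fun i => S i ω) true) (u t (fun i => S i ω) false)) =ᵐ[μ]
        fun ω => max (utilde (S t ω) (π t ω) true) (utilde (S t ω) (π t ω) false)) := by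
  classical
  obtain ⟨C, hgC⟩ := hgbdd
  have : IsMarkovKernel (⟨κ, hκmeas⟩ : Kernel (ℝ × ℝ) (ℝ × ℝ)) := ⟨hκprob⟩
  have hF : ∀ t, ⨆ i ∈ Finset.range (t + 1), MeasurableSpace.comap (S i) inferInstance
      = MeasurableSpace.comap (history S t) inferInstance := fun t => (comap_history S t).symm
  have hfilter : ∀ t, IsCondLaw μ (fun ω => ⟨π t ω, hπprob t ω⟩) (Y t) (history S t) :=
    fun t => ⟨((hπmeas t).mono ((hF t).trans_le (measurable_history hS t).comap_le)
      le_rfl).subtype_mk, fun s hs => hF t ▸ hπ t s hs⟩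
  have hchain : ∀ t < T, IsCondLaw μ (fun ω => ⟨κ (S t ω, Y t ω), hκprob _⟩)
      (fun ω => (S (t + 1) ω, Y (t + 1) ω)) (history (fun i ω => (S i ω, Y i ω)) t) :=
    fun t ht => .of_condExp_eq_integral (hκmeas.comp ((hS t).prodMk (hY t))).subtype_mk
      fun f hf hfC => by rw [comap_history]; exact hMarkov t ht f hf hfC
  have hexercise : ∀ t ≤ T, ∀ s, u t s true = g (s t) := fun t ht =>
    (Nat.lt_or_eq_of_le ht).elim (huE t) fun h => h ▸ huTE
  have hhold := ae_eq_holdValue (κ := ⟨κ, hκmeas⟩) (w := fun t ω => u t (fun i => S i ω) false)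
    hS hY hchain hfilter hg hgC (ae_of_all _ fun ω => huTH _) fun t ht => by
      simpa only [hexercise (t + 1) ht, hF] using huH t ht
  refine fun t ht => ⟨fun x m d => if d then g x else if h : IsProbabilityMeasure m then
    holdValue ⟨κ, hκmeas⟩ g (T - t) (x, ⟨m, h⟩) else 0, fun d => ?_, ?_⟩
  · cases d
    · filter_upwards [hhold t ht] with ω h
      simpa [hπprob t ω] using h
    · exact ae_of_all _ fun ω => by simpa using hexercise t ht _
  · filter_upwards [hhold t ht] with ω h
    simp [hexercise t ht, h, hπprob t ω]

/-- Lemma 3.1 (sufficiency of the filtering distributions for the dynamic programming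
problem).  For the partially observed Markov chain `(S_t, Y_t)` with transition kernel `κ`,
filtering distributions `π_t = P(Y_t ∈ · | S_0, …, S_t)`, and value functions `u_t`
defined by the American-option dynamic programming recursion with decisions
`d ∈ {E, H}` (here `true = E` (exercise) and `false = H` (hold)), for each `t ≤ T` there
is a function `ũ_t` of `(S_t, π_t, d)` such that almost surely
`u_t(S_0, …, S_t, d) = ũ_t(S_t, π_t, d)` for both decisions, and consequently
`u*_t(S_0, …, S_t) = max_d u_t = max_d ũ_t(S_t, π_t, d) = ũ*_t(S_t, π_t)` almost surely:
the value and the optimal decision depend on the price history only through `S_t` and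
`π_t`. -/
theorem value_function_factors_through_filter
    {Ω : Type*} [MeasurableSpace Ω] (μ : Measure Ω) [IsProbabilityMeasure μ]
    (T : ℕ) (hT : 0 < T)
    (S Y : ℕ → Ω → ℝ) (hS : ∀ t, Measurable (S t)) (hY : ∀ t, Measurable (Y t))
    (κ : ℝ × ℝ → Measure (ℝ × ℝ)) (hκmeas : Measurable κ)
    (hκprob : ∀ p, IsProbabilityMeasure (κ p))
    -- `(S_t, Y_t)` is a time-homogeneous Markov chain with transition kernel `κ`
    (hMarkov : ∀ t, t < T → ∀ f : ℝ × ℝ → ℝ, Measurable f → (∃ C, ∀ p, |f p| ≤ C) →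
      μ[(fun ω => f (S (t + 1) ω, Y (t + 1) ω)) |
          ⨆ i ∈ Finset.range (t + 1),
            MeasurableSpace.comap (fun ω => (S i ω, Y i ω)) inferInstance]
        =ᵐ[μ] fun ω => ∫ p, f p ∂(κ (S t ω, Y t ω)))
    -- `π_t` is a regular version of the conditional law of `Y_t` given `σ(S_0, …, S_t)`
    (π : ℕ → Ω → Measure ℝ) (hπprob : ∀ t ω, IsProbabilityMeasure (π t ω))
    (hπmeas : ∀ t, Measurable[⨆ i ∈ Finset.range (t + 1),
        MeasurableSpace.comap (S i) inferInstance] (π t))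
    (hπ : ∀ t, ∀ A : Set ℝ, MeasurableSet A →
      (fun ω => (π t ω A).toReal) =ᵐ[μ]
        μ[Set.indicator {ω | Y t ω ∈ A} (fun _ => (1 : ℝ)) |
          ⨆ i ∈ Finset.range (t + 1), MeasurableSpace.comap (S i) inferInstance])
    -- bounded measurable payoff
    (g : ℝ → ℝ) (hg : Measurable g) (hgbdd : ∃ C, ∀ x, |g x| ≤ C)
    -- the dynamic programming value functions; `u t s d` depends only on `s 0, …, s t`
    (u : ℕ → (ℕ → ℝ) → Bool → ℝ)
    (hdep : ∀ t d s s', (∀ i, i ≤ t → s i = s' i) → u t s d = u t s' d)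
    (huTE : ∀ s, u T s true = g (s T))
    (huTH : ∀ s, u T s false = 0)
    (huE : ∀ t, t < T → ∀ s, u t s true = g (s t))
    (huH : ∀ t, t < T →
      (fun ω => u t (fun i => S i ω) false) =ᵐ[μ]
        μ[(fun ω => max (u (t + 1) (fun i => S i ω) true)
            (u (t + 1) (fun i => S i ω) false)) |
          ⨆ i ∈ Finset.range (t + 1), MeasurableSpace.comap (S i) inferInstance]) :
    ∀ t, t ≤ T → ∃ utilde : ℝ → Measure ℝ → Bool → ℝ,
      (∀ d : Bool,
        (fun ω => u t (fun i => S i ω) d) =ᵐ[μ] fun ω => utilde (S t ω) (π t ω) d) ∧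
      ((fun ω => max (u t (fun i => S i ω) true) (u t (fun i => S i ω) false)) =ᵐ[μ]
        fun ω => max (utilde (S t ω) (π t ω) true) (utilde (S t ω) (π t ω) false)) :=
  value_function_factors_through_filter_general μ T S Y hS hY κ hκmeas hκprob hMarkov π hπprob
    hπmeas hπ g hg hgbdd u huTE huTH huE huH
end

section
/- For each t < T and each bounded measurable function f : ℝ × ℝ → ℝ, almost surely E[f(S_{t+1}, Y_{t+1}) | σ(S_0, …, S_t)] = ∫_ℝ ( ∫_{ℝ×ℝ} f(s', y') κ((S_t, y))(d(s', y')) ) π_t(dy); that is, the conditional expectation of a function of the next state given the observed price history equals the integral, against the filtering distribution π_t, of the one-step conditional expectation given (S_t, Y_t) = (S_t, y). -/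
/-!
Conditioning first on the full history of `(S, Y)` and then on the observed prices (tower
property), the Markov property replaces `f(S_{t+1}, Y_{t+1})` by `g(S_t, Y_t)` with
`g(s, y) = ∫ f dκ(s, y)`. Now `S_t` is a function of the observed history `X = (S_0, …, S_t)`,
so `E[g(S_t, Y_t) | X] = ∫ g(S_t, y) ν(X, dy)` for the conditional distribution `ν` of `Y_t`
given `X`; and `π_t = ν(X, ·)` almost surely, since both are probability measures computing
`P(Y_t ∈ · | X)`, hence agree a.s. on the countably many sets `Iic q`, `q ∈ ℚ`.
-/

open MeasureTheory ProbabilityTheory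

theorem MeasureTheory.Measure.ext_of_Iic_rat {μ ν : Measure ℝ} [IsProbabilityMeasure μ]
    [IsProbabilityMeasure ν] (h : ∀ q : ℚ, μ (Set.Iic q) = ν (Set.Iic q)) : μ = ν := by
  borelize ℝ
  refine ext_of_generate_finite _ Real.borel_eq_generateFrom_Iic_rat Real.isPiSystem_Iic_rat
    ?_ (by simp)
  simp only [Set.mem_iUnion, Set.mem_singleton_iff]
  rintro _ ⟨q, rfl⟩
  exact h q

theorem MeasurableSpace.biSup_range_comap_eq_comap_pi {Ω α : Type*} [MeasurableSpace α]
    (S : ℕ → Ω → α) (n : ℕ) :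
    ⨆ i ∈ Finset.range n, MeasurableSpace.comap (S i) inferInstance =
      MeasurableSpace.comap (fun ω (i : Fin n) => S i ω) MeasurableSpace.pi := by
  simp_rw [MeasurableSpace.pi, MeasurableSpace.comap_iSup, MeasurableSpace.comap_comp]
  apply le_antisymm
  · exact iSup₂_le fun i hi => le_iSup_of_le ⟨i, Finset.mem_range.mp hi⟩ le_rfl
  · exact iSup_le fun i => le_iSup₂_of_le i.val (Finset.mem_range.mpr i.isLt) le_rfl

namespace ProbabilityTheory

variable {Ω β F : Type*} [MeasurableSpace Ω] [NormedAddCommGroup F] {mβ : MeasurableSpace β}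
  {μ : Measure Ω} [IsFiniteMeasure μ] {X : Ω → β} {Y : Ω → ℝ} {π : Ω → Measure ℝ}
  [∀ ω, IsProbabilityMeasure (π ω)]

theorem ae_eq_condDistrib_of_forall_condExp_indicator (hX : Measurable X) (hY : Measurable Y)
    (hπ : ∀ A : Set ℝ, MeasurableSet A →
      (fun ω => (π ω A).toReal) =ᵐ[μ]
        μ[Set.indicator {ω | Y ω ∈ A} (fun _ => (1 : ℝ)) | mβ.comap X]) :
    ∀ᵐ ω ∂μ, π ω = condDistrib Y X μ (X ω) := by
  have hIic : ∀ q : ℚ, ∀ᵐ ω ∂μ, π ω (Set.Iic q) = condDistrib Y X μ (X ω) (Set.Iic q) := by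
    intro q
    filter_upwards [hπ _ measurableSet_Iic, condDistrib_ae_eq_condExp hX hY measurableSet_Iic]
      with ω hπω hcondω
    exact (ENNReal.toReal_eq_toReal_iff' (measure_ne_top _ _) (measure_ne_top _ _)).mp
      (hπω.trans hcondω.symm)
  filter_upwards [ae_all_iff.mpr hIic] with ω hω
  exact Measure.ext_of_Iic_rat hω

theorem condExp_prod_ae_eq_integral_of_forall_condExp_indicator [NormedSpace ℝ F]
    [CompleteSpace F] {f : β × ℝ → F} (hX : Measurable X) (hY : Measurable Y)
    (hπ : ∀ A : Set ℝ, MeasurableSet A →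
      (fun ω => (π ω A).toReal) =ᵐ[μ]
        μ[Set.indicator {ω | Y ω ∈ A} (fun _ => (1 : ℝ)) | mβ.comap X])
    (hf : StronglyMeasurable f) (hf_int : Integrable (fun ω => f (X ω, Y ω)) μ) :
    μ[fun ω => f (X ω, Y ω) | mβ.comap X] =ᵐ[μ] fun ω => ∫ y, f (X ω, y) ∂π ω := by
  filter_upwards [condExp_prod_ae_eq_integral_condDistrib hX hY.aemeasurable hf hf_int,
    ae_eq_condDistrib_of_forall_condExp_indicator hX hY hπ] with ω hcond hπω
  rw [hcond, hπω]

end ProbabilityTheory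

theorem filtering_sufficiency_general
    {Ω : Type*} [MeasurableSpace Ω] (μ : Measure Ω) [IsProbabilityMeasure μ]
    (T : ℕ)
    (S Y : ℕ → Ω → ℝ) (hS : ∀ t, Measurable (S t)) (hY : ∀ t, Measurable (Y t))
    (κ : ℝ × ℝ → Measure (ℝ × ℝ)) (hκmeas : Measurable κ)
    (hκprob : ∀ p, IsProbabilityMeasure (κ p))
    -- `(S_t, Y_t)` is a time-homogeneous Markov chain with transition kernel `κ`
    (hMarkov : ∀ t, t < T → ∀ f : ℝ × ℝ → ℝ, Measurable f → (∃ C, ∀ p, |f p| ≤ C) →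
      μ[(fun ω => f (S (t + 1) ω, Y (t + 1) ω)) |
          ⨆ i ∈ Finset.range (t + 1),
            MeasurableSpace.comap (fun ω => (S i ω, Y i ω)) inferInstance]
        =ᵐ[μ] fun ω => ∫ p, f p ∂(κ (S t ω, Y t ω)))
    -- `π_t` is a regular version of the conditional law of `Y_t` given `σ(S_0, …, S_t)`
    (π : ℕ → Ω → Measure ℝ) (hπprob : ∀ t ω, IsProbabilityMeasure (π t ω))
    (hπ : ∀ t, ∀ A : Set ℝ, MeasurableSet A →
      (fun ω => (π t ω A).toReal) =ᵐ[μ]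
        μ[Set.indicator {ω | Y t ω ∈ A} (fun _ => (1 : ℝ)) |
          ⨆ i ∈ Finset.range (t + 1), MeasurableSpace.comap (S i) inferInstance]) :
    ∀ t, t < T → ∀ f : ℝ × ℝ → ℝ, Measurable f → (∃ C, ∀ p, |f p| ≤ C) →
      μ[(fun ω => f (S (t + 1) ω, Y (t + 1) ω)) |
          ⨆ i ∈ Finset.range (t + 1), MeasurableSpace.comap (S i) inferInstance]
        =ᵐ[μ] fun ω => ∫ y, (∫ p, f p ∂(κ (S t ω, y))) ∂(π t ω) := by
  intro t ht f hf ⟨C, hC⟩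
  set X : Ω → (Fin (t + 1) → ℝ) := fun ω i => S i ω
  have hX : Measurable X := measurable_pi_lambda _ fun i => hS i
  have hobs : ⨆ i ∈ Finset.range (t + 1), MeasurableSpace.comap (S i) inferInstance =
      MeasurableSpace.comap X MeasurableSpace.pi :=
    MeasurableSpace.biSup_range_comap_eq_comap_pi S (t + 1)
  have hobs_le : ⨆ i ∈ Finset.range (t + 1), MeasurableSpace.comap (S i) inferInstance ≤
      ⨆ i ∈ Finset.range (t + 1),
        MeasurableSpace.comap (fun ω => (S i ω, Y i ω)) inferInstance := iSup₂_mono fun i _ =>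
    (measurable_fst.comp (comap_measurable fun ω => (S i ω, Y i ω))).comap_le
  have hfull_le : ⨆ i ∈ Finset.range (t + 1),
      MeasurableSpace.comap (fun ω => (S i ω, Y i ω)) inferInstance ≤ ‹MeasurableSpace Ω› :=
    iSup₂_le fun i _ => ((hS i).prodMk (hY i)).comap_le
  have hg_meas : StronglyMeasurable fun p => ∫ q, f q ∂κ p :=
    hf.stronglyMeasurable.integral_kernel (κ := ⟨κ, hκmeas⟩)
  have hg_le : ∀ p, ‖∫ q, f q ∂κ p‖ ≤ C := fun p => by
    have := hκprob p
    simpa using norm_integral_le_of_norm_le_const (μ := κ p)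
      (.of_forall fun q => (Real.norm_eq_abs (f q)).trans_le (hC q))
  calc _ =ᵐ[μ] μ[μ[fun ω => f (S (t + 1) ω, Y (t + 1) ω) |
          ⨆ i ∈ Finset.range (t + 1),
            MeasurableSpace.comap (fun ω => (S i ω, Y i ω)) inferInstance] |
        ⨆ i ∈ Finset.range (t + 1), MeasurableSpace.comap (S i) inferInstance] :=
        (condExp_condExp_of_le hobs_le hfull_le).symm
    _ =ᵐ[μ] μ[fun ω => ∫ p, f p ∂κ (S t ω, Y t ω) |
        ⨆ i ∈ Finset.range (t + 1), MeasurableSpace.comap (S i) inferInstance] :=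
        condExp_congr_ae (hMarkov t ht f hf ⟨C, hC⟩)
    _ =ᵐ[μ] fun ω => ∫ y, (∫ p, f p ∂κ (S t ω, y)) ∂π t ω := by
        rw [hobs]
        exact condExp_prod_ae_eq_integral_of_forall_condExp_indicator
          (f := fun q : (Fin (t + 1) → ℝ) × ℝ => ∫ p, f p ∂κ (q.1 (Fin.last t), q.2))
          hX (hY t) (fun A hA => hobs ▸ hπ t A hA)
          (hg_meas.comp_measurable ((measurable_pi_apply _).prodMap measurable_id))
          (.of_bound (hg_meas.comp_measurable ((hS t).prodMk (hY t))).aestronglyMeasurable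
            C (.of_forall fun ω => hg_le _))

/-- Sufficiency of the filtering distribution: for the partially observed Markov chain
`(S_t, Y_t)` with transition kernel `κ` and filtering distributions
`π_t = P(Y_t ∈ · | S_0, …, S_t)`, the conditional expectation of any bounded measurable
function `f` of the next state, given the observed price history `σ(S_0, …, S_t)`, equals
`∫ (∫ f dκ(S_t, y)) π_t(dy)` almost surely. -/
theorem filtering_sufficiency
    {Ω : Type*} [MeasurableSpace Ω] (μ : Measure Ω) [IsProbabilityMeasure μ]
    (T : ℕ) (hT : 0 < T)
    (S Y : ℕ → Ω → ℝ) (hS : ∀ t, Measurable (S t)) (hY : ∀ t, Measurable (Y t))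
    (κ : ℝ × ℝ → Measure (ℝ × ℝ)) (hκmeas : Measurable κ)
    (hκprob : ∀ p, IsProbabilityMeasure (κ p))
    -- `(S_t, Y_t)` is a time-homogeneous Markov chain with transition kernel `κ`
    (hMarkov : ∀ t, t < T → ∀ f : ℝ × ℝ → ℝ, Measurable f → (∃ C, ∀ p, |f p| ≤ C) →
      μ[(fun ω => f (S (t + 1) ω, Y (t + 1) ω)) |
          ⨆ i ∈ Finset.range (t + 1),
            MeasurableSpace.comap (fun ω => (S i ω, Y i ω)) inferInstance]
        =ᵐ[μ] fun ω => ∫ p, f p ∂(κ (S t ω, Y t ω)))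
    -- `π_t` is a regular version of the conditional law of `Y_t` given `σ(S_0, …, S_t)`
    (π : ℕ → Ω → Measure ℝ) (hπprob : ∀ t ω, IsProbabilityMeasure (π t ω))
    (hπmeas : ∀ t, Measurable[⨆ i ∈ Finset.range (t + 1),
        MeasurableSpace.comap (S i) inferInstance] (π t))
    (hπ : ∀ t, ∀ A : Set ℝ, MeasurableSet A →
      (fun ω => (π t ω A).toReal) =ᵐ[μ]
        μ[Set.indicator {ω | Y t ω ∈ A} (fun _ => (1 : ℝ)) |
          ⨆ i ∈ Finset.range (t + 1), MeasurableSpace.comap (S i) inferInstance]) :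
    ∀ t, t < T → ∀ f : ℝ × ℝ → ℝ, Measurable f → (∃ C, ∀ p, |f p| ≤ C) →
      μ[(fun ω => f (S (t + 1) ω, Y (t + 1) ω)) |
          ⨆ i ∈ Finset.range (t + 1), MeasurableSpace.comap (S i) inferInstance]
        =ᵐ[μ] fun ω => ∫ y, (∫ p, f p ∂(κ (S t ω, y))) ∂(π t ω) :=
  filtering_sufficiency_general μ T S Y hS hY κ hκmeas hκprob hMarkov π hπprob hπ
end

section
/- The expected initial value of the backward dynamic programming recursion equals the optimal stopping value: E[U_0] = sup_τ E[Z_τ · 1_{τ ≤ T}], where the supremum is taken over all stopping times τ : Ω → {0, 1, …, T} ∪ {∞} with respect to the filtration (ℱ_t), with the convention that the payoff is 0 on the event {τ = ∞} (the option is never exercised). -/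
open MeasureTheory Set

/-!
Backward induction on `t` shows `∫_{τ ≥ t} Z_τ 1_{τ ≤ T} ≤ ∫_{τ ≥ t} U_t` for every stopping
time `τ`: split `{τ ≥ t}` into `{τ = t}`, where `Z_t ≤ U_t`, and `{τ > t} ∈ ℱ_t`, over which `U_{t+1}`
has the same integral as `E[U_{t+1} | ℱ_t] ≤ U_t`. All these inequalities are equalities for the
first time `τ*` with `U_t = Z_t` (and `τ* = ∞` if there is none), so `τ*` attains the supremum.
-/

namespace MeasureTheory

variable {Ω : Type*} {m : MeasurableSpace Ω} {μ : Measure Ω} {𝔽 : Filtration ℕ m}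

noncomputable def exercisePayoff (Z : ℕ → Ω → ℝ) (T : ℕ) (τ : Ω → ℕ∞) : Ω → ℝ :=
  {ω | τ ω ≤ T}.indicator fun ω => Z (τ ω).toNat ω

variable {Z : ℕ → Ω → ℝ} {T : ℕ} {τ : Ω → ℕ∞}

lemma exercisePayoff_of_eq {ω : Ω} {t : ℕ} (hτ : τ ω = t) (ht : t ≤ T) :
    exercisePayoff Z T τ ω = Z t ω := by
  simp [exercisePayoff, hτ, ht]

lemma exercisePayoff_of_lt {ω : Ω} (hτ : (T : ℕ∞) < τ ω) : exercisePayoff Z T τ ω = 0 :=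
  indicator_of_notMem (s := {ω | τ ω ≤ T}) (not_le.2 hτ) _

lemma exercisePayoff_neg : exercisePayoff (-Z) T τ = -exercisePayoff Z T τ :=
  indicator_neg' _ _

lemma exercisePayoff_eq_sum (ω : Ω) :
    exercisePayoff Z T τ ω = ∑ t ∈ Finset.range (T + 1), {ω | τ ω = t}.indicator (Z t) ω := by
  cases h : τ ω using ENat.recTopCoe with
  | top => simp [exercisePayoff, h]
  | coe k =>
    by_cases hk : k ≤ T <;> simp [exercisePayoff, h, hk, indicator]

lemma IsStoppingTime.integrable_exercisePayoff (hτ : IsStoppingTime 𝔽 τ)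
    (hZ : ∀ t ≤ T, Integrable (Z t) μ) : Integrable (exercisePayoff Z T τ) μ := by
  simp_rw [funext exercisePayoff_eq_sum]
  exact integrable_finsetSum _ fun t ht =>
    (hZ t (Nat.lt_succ_iff.1 (Finset.mem_range.1 ht))).indicator (𝔽.le t _ (hτ.measurableSet_eq t))

lemma setOf_coe_le_eq_union (t : ℕ) :
    {ω | (t : ℕ∞) ≤ τ ω} = {ω | τ ω = t} ∪ {ω | (t : ℕ∞) < τ ω} := by
  ext ω; simp [le_iff_eq_or_lt, eq_comm]

lemma setOf_coe_lt_eq (t : ℕ) :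
    {ω | (t : ℕ∞) < τ ω} = {ω | ((t + 1 : ℕ) : ℕ∞) ≤ τ ω} := by
  ext ω; simp [ENat.add_one_le_iff]

lemma disjoint_setOf_eq_setOf_lt (t : ℕ) :
    Disjoint {ω | τ ω = t} {ω | (t : ℕ∞) < τ ω} :=
  disjoint_left.2 fun _ hω hlt => (ne_of_lt hlt) hω.symm

variable {V : ℕ → Ω → ℝ}

theorem setIntegral_exercisePayoff_le [IsFiniteMeasure μ] (hτ : IsStoppingTime 𝔽 τ)
    (hZ : ∀ t ≤ T, Integrable (Z t) μ) (hV : ∀ t ≤ T, Integrable (V t) μ)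
    (h_stop : ∀ t ≤ T, ∀ᵐ ω ∂μ, τ ω = t → Z t ω ≤ V t ω)
    (h_cont : ∀ t < T, ∀ᵐ ω ∂μ, (t : ℕ∞) < τ ω → μ[V (t + 1) | 𝔽 t] ω ≤ V t ω)
    (h_end : ∀ᵐ ω ∂μ, (T : ℕ∞) < τ ω → 0 ≤ V T ω) {t : ℕ} (ht : t ≤ T) :
    ∫ ω in {ω | (t : ℕ∞) ≤ τ ω}, exercisePayoff Z T τ ω ∂μ
      ≤ ∫ ω in {ω | (t : ℕ∞) ≤ τ ω}, V t ω ∂μ := by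
  have hP := hτ.integrable_exercisePayoff hZ
  have h_eq : ∀ t : ℕ, MeasurableSet {ω | τ ω = t} := fun t => 𝔽.le t _ (hτ.measurableSet_eq t)
  have h_gt : ∀ t : ℕ, MeasurableSet {ω | (t : ℕ∞) < τ ω} :=
    fun t => 𝔽.le t _ (hτ.measurableSet_gt t)
  have h_split : ∀ {f : Ω → ℝ}, Integrable f μ → ∀ t : ℕ, ∫ ω in {ω | (t : ℕ∞) ≤ τ ω}, f ω ∂μ
      = ∫ ω in {ω | τ ω = t}, f ω ∂μ + ∫ ω in {ω | (t : ℕ∞) < τ ω}, f ω ∂μ := fun hf t => by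
    rw [setOf_coe_le_eq_union, setIntegral_union (disjoint_setOf_eq_setOf_lt t) (h_gt t)
      hf.integrableOn hf.integrableOn]
  have h_stopped : ∀ t ≤ T, ∫ ω in {ω | τ ω = t}, exercisePayoff Z T τ ω ∂μ
      ≤ ∫ ω in {ω | τ ω = t}, V t ω ∂μ := fun t ht => by
    rw [setIntegral_congr_fun (h_eq t) fun ω hω => exercisePayoff_of_eq hω ht]
    exact setIntegral_mono_on_ae (hZ t ht).integrableOn (hV t ht).integrableOn (h_eq t)
      (h_stop t ht)
  induction ht using Nat.decreasingInduction with
  | self =>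
    rw [h_split hP, h_split (hV T le_rfl)]
    refine add_le_add (h_stopped T le_rfl) ?_
    rw [setIntegral_congr_fun (h_gt T) fun ω hω => exercisePayoff_of_lt hω, integral_zero]
    exact setIntegral_nonneg_ae (h_gt T) h_end
  | of_succ t ht ih =>
    rw [h_split hP, h_split (hV t ht.le)]
    refine add_le_add (h_stopped t ht.le) ?_
    calc ∫ ω in {ω | (t : ℕ∞) < τ ω}, exercisePayoff Z T τ ω ∂μ
        ≤ ∫ ω in {ω | (t : ℕ∞) < τ ω}, V (t + 1) ω ∂μ := by rw [setOf_coe_lt_eq]; exact ih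
      _ = ∫ ω in {ω | (t : ℕ∞) < τ ω}, μ[V (t + 1) | 𝔽 t] ω ∂μ :=
        (setIntegral_condExp (𝔽.le t) (hV _ ht) (hτ.measurableSet_gt t)).symm
      _ ≤ ∫ ω in {ω | (t : ℕ∞) < τ ω}, V t ω ∂μ :=
        setIntegral_mono_on_ae integrable_condExp.integrableOn (hV t ht.le).integrableOn (h_gt t)
          (h_cont t ht)

theorem integral_exercisePayoff_le [IsFiniteMeasure μ] (hτ : IsStoppingTime 𝔽 τ)
    (hZ : ∀ t ≤ T, Integrable (Z t) μ) (hV : ∀ t ≤ T, Integrable (V t) μ)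
    (h_stop : ∀ t ≤ T, ∀ᵐ ω ∂μ, τ ω = t → Z t ω ≤ V t ω)
    (h_cont : ∀ t < T, ∀ᵐ ω ∂μ, (t : ℕ∞) < τ ω → μ[V (t + 1) | 𝔽 t] ω ≤ V t ω)
    (h_end : ∀ᵐ ω ∂μ, (T : ℕ∞) < τ ω → 0 ≤ V T ω) :
    ∫ ω, exercisePayoff Z T τ ω ∂μ ≤ ∫ ω, V 0 ω ∂μ := by
  simpa using setIntegral_exercisePayoff_le hτ hZ hV h_stop h_cont h_end (Nat.zero_le T)

theorem integral_le_integral_exercisePayoff [IsFiniteMeasure μ] (hτ : IsStoppingTime 𝔽 τ)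
    (hZ : ∀ t ≤ T, Integrable (Z t) μ) (hV : ∀ t ≤ T, Integrable (V t) μ)
    (h_stop : ∀ t ≤ T, ∀ᵐ ω ∂μ, τ ω = t → V t ω ≤ Z t ω)
    (h_cont : ∀ t < T, ∀ᵐ ω ∂μ, (t : ℕ∞) < τ ω → V t ω ≤ μ[V (t + 1) | 𝔽 t] ω)
    (h_end : ∀ᵐ ω ∂μ, (T : ℕ∞) < τ ω → V T ω ≤ 0) :
    ∫ ω, V 0 ω ∂μ ≤ ∫ ω, exercisePayoff Z T τ ω ∂μ := by
  have h := integral_exercisePayoff_le (Z := -Z) (V := -V) hτ (fun t ht => (hZ t ht).neg)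
    (fun t ht => (hV t ht).neg)
    (fun t ht => by filter_upwards [h_stop t ht] with ω h hω using neg_le_neg (h hω))
    (fun t ht => by
      filter_upwards [h_cont t ht, condExp_neg (V (t + 1)) (𝔽 t)] with ω h h_neg hω
      simpa [h_neg] using h hω)
    (by filter_upwards [h_end] with ω h hω using neg_nonneg.2 (h hω))
  simpa [exercisePayoff_neg, integral_neg] using h

/-- The first `t` with `U t = Z t`, or `⊤`. Freezing `U - Z` at time `T` keeps it adapted although
`U` is only specified up to `T`, and forces the hitting time to be `≤ T` unless it is `⊤`. -/
noncomputable def optimalExerciseTime (Z U : ℕ → Ω → ℝ) (T : ℕ) : Ω → ℕ∞ :=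
  hittingAfter (fun t ω => U (min t T) ω - Z (min t T) ω) {0} 0

section optimalExerciseTime

variable {U : ℕ → Ω → ℝ} {ω : Ω}

lemma optimalExerciseTime_le_or_eq_top (ω : Ω) :
    optimalExerciseTime Z U T ω ≤ T ∨ optimalExerciseTime Z U T ω = ⊤ := by
  refine or_iff_not_imp_right.2 fun h => ?_
  obtain ⟨j, -, hj⟩ := not_forall₂.1 (hittingAfter_eq_top_iff.not.1 h)
  calc optimalExerciseTime Z U T ω ≤ (min j T : ℕ) :=
        hittingAfter_le_of_mem (Nat.zero_le _) (by simpa using hj)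
    _ ≤ T := by exact_mod_cast min_le_right j T

lemma eq_of_optimalExerciseTime_eq {t : ℕ} (h : optimalExerciseTime Z U T ω = t) (ht : t ≤ T) :
    U t ω = Z t ω := by
  have := hittingAfter_mem_set_of_ne_top (show optimalExerciseTime Z U T ω ≠ ⊤ by simp [h])
  rw [optimalExerciseTime] at h
  simpa [h, min_eq_left ht, sub_eq_zero] using this

lemma ne_of_lt_optimalExerciseTime {t : ℕ} (h : (t : ℕ∞) < optimalExerciseTime Z U T ω)
    (ht : t ≤ T) : U t ω ≠ Z t ω := by
  have := notMem_of_lt_hittingAfter h (Nat.zero_le t)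
  simpa [min_eq_left ht, sub_eq_zero] using this

end optimalExerciseTime

structure IsSnellEnvelope (μ : Measure Ω) (𝔽 : Filtration ℕ m) (T : ℕ) (Z U : ℕ → Ω → ℝ) :
    Prop where
  terminal : U T = fun ω => max (Z T ω) 0
  step : ∀ t < T, U t = fun ω => max (Z t ω) (μ[U (t + 1) | 𝔽 t] ω)

namespace IsSnellEnvelope

variable {U : ℕ → Ω → ℝ}

lemma le (hU : IsSnellEnvelope μ 𝔽 T Z U) {t : ℕ} (ht : t ≤ T) (ω : Ω) : Z t ω ≤ U t ω := by
  rcases ht.lt_or_eq with ht | rfl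
  · rw [hU.step t ht]; exact le_max_left _ _
  · rw [hU.terminal]; exact le_max_left _ _

lemma condExp_le (hU : IsSnellEnvelope μ 𝔽 T Z U) {t : ℕ} (ht : t < T) (ω : Ω) :
    μ[U (t + 1) | 𝔽 t] ω ≤ U t ω := by
  rw [hU.step t ht]; exact le_max_right _ _

lemma terminal_nonneg (hU : IsSnellEnvelope μ 𝔽 T Z U) (ω : Ω) : 0 ≤ U T ω := by
  rw [hU.terminal]; exact le_max_right _ _

lemma eq_condExp_of_ne (hU : IsSnellEnvelope μ 𝔽 T Z U) {t : ℕ} (ht : t < T) {ω : Ω}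
    (h : U t ω ≠ Z t ω) : U t ω = μ[U (t + 1) | 𝔽 t] ω := by
  rw [hU.step t ht] at h ⊢
  exact (max_choice _ _).resolve_left h

lemma terminal_eq_zero_of_ne (hU : IsSnellEnvelope μ 𝔽 T Z U) {ω : Ω} (h : U T ω ≠ Z T ω) :
    U T ω = 0 := by
  rw [hU.terminal] at h ⊢
  exact (max_choice _ _).resolve_left h

lemma integrable (hU : IsSnellEnvelope μ 𝔽 T Z U) (hZ : ∀ t ≤ T, Integrable (Z t) μ) {t : ℕ}
    (ht : t ≤ T) : Integrable (U t) μ := by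
  rcases ht.lt_or_eq with ht' | rfl
  · rw [hU.step t ht']; exact (hZ t ht).sup integrable_condExp
  · rw [hU.terminal]; exact (hZ t ht).sup (integrable_zero _ _ μ)

lemma measurable (hU : IsSnellEnvelope μ 𝔽 T Z U) (hZ : Adapted 𝔽 Z) {t : ℕ} (ht : t ≤ T) :
    Measurable[𝔽 t] (U t) := by
  rcases ht.lt_or_eq with ht | rfl
  · rw [hU.step t ht]; exact (hZ t).max stronglyMeasurable_condExp.measurable
  · rw [hU.terminal]; exact (hZ t).max measurable_const

lemma isStoppingTime_optimalExerciseTime (hU : IsSnellEnvelope μ 𝔽 T Z U) (hZ : Adapted 𝔽 Z) :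
    IsStoppingTime 𝔽 (optimalExerciseTime Z U T) := by
  refine Adapted.isStoppingTime_hittingAfter (fun t => ?_) (measurableSet_singleton 0)
  exact ((hU.measurable hZ (min_le_right t T)).sub (hZ _)).mono (𝔽.mono (min_le_left t T)) le_rfl

theorem integral_exercisePayoff_le_integral [IsFiniteMeasure μ] (hU : IsSnellEnvelope μ 𝔽 T Z U)
    (hZ : ∀ t ≤ T, Integrable (Z t) μ) (hτ : IsStoppingTime 𝔽 τ) :
    ∫ ω, exercisePayoff Z T τ ω ∂μ ≤ ∫ ω, U 0 ω ∂μ :=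
  integral_exercisePayoff_le hτ hZ (fun _ => hU.integrable hZ)
    (fun _ ht => ae_of_all _ fun ω _ => hU.le ht ω)
    (fun _ ht => ae_of_all _ fun ω _ => hU.condExp_le ht ω)
    (ae_of_all _ fun ω _ => hU.terminal_nonneg ω)

theorem integral_eq_integral_exercisePayoff_optimalExerciseTime [IsFiniteMeasure μ]
    (hU : IsSnellEnvelope μ 𝔽 T Z U) (hZ : ∀ t ≤ T, Integrable (Z t) μ) (hZ_adapted : Adapted 𝔽 Z) :
    ∫ ω, U 0 ω ∂μ = ∫ ω, exercisePayoff Z T (optimalExerciseTime Z U T) ω ∂μ := by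
  have hτ := hU.isStoppingTime_optimalExerciseTime hZ_adapted
  refine le_antisymm ?_ (hU.integral_exercisePayoff_le_integral hZ hτ)
  refine integral_le_integral_exercisePayoff hτ hZ (fun _ => hU.integrable hZ)
    (fun t ht => ae_of_all _ fun ω h => (eq_of_optimalExerciseTime_eq h ht).le)
    (fun t ht => ae_of_all _ fun ω h => ?_) (ae_of_all _ fun ω h => ?_)
  · exact (hU.eq_condExp_of_ne ht (ne_of_lt_optimalExerciseTime h ht.le)).le
  · exact (hU.terminal_eq_zero_of_ne (ne_of_lt_optimalExerciseTime h le_rfl)).le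

end IsSnellEnvelope

end MeasureTheory

theorem snell_envelope_optimal_stopping_general
    {Ω : Type*} {m : MeasurableSpace Ω} (μ : Measure Ω) [IsProbabilityMeasure μ]
    (T : ℕ) (𝔽 : Filtration ℕ m)
    (Z : ℕ → Ω → ℝ) (hadapted : Adapted 𝔽 Z) (hint : ∀ t, Integrable (Z t) μ)
    (U : ℕ → Ω → ℝ)
    (hUT : U T = fun ω => max (Z T ω) 0)
    (hU : ∀ t, t < T → U t = fun ω => max (Z t ω) ((μ[U (t + 1) | 𝔽 t]) ω)) :
    ∫ ω, U 0 ω ∂μ =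
      ⨆ τ : {τ : Ω → ℕ∞ //
          (∀ n : ℕ, MeasurableSet[𝔽 n] {ω | τ ω ≤ (n : ℕ∞)}) ∧
          ∀ ω, τ ω ≤ (T : ℕ∞) ∨ τ ω = ⊤},
        ∫ ω, Set.indicator {ω | τ.1 ω ≤ (T : ℕ∞)} (fun ω => Z (τ.1 ω).toNat ω) ω ∂μ := by
  have hsnell : IsSnellEnvelope μ 𝔽 T Z U := ⟨hUT, hU⟩
  have hZ : ∀ t ≤ T, Integrable (Z t) μ := fun t _ => hint t
  have h_le : ∀ τ : {τ : Ω → ℕ∞ // IsStoppingTime 𝔽 τ ∧ ∀ ω, τ ω ≤ (T : ℕ∞) ∨ τ ω = ⊤},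
      ∫ ω, exercisePayoff Z T τ.1 ω ∂μ ≤ ∫ ω, U 0 ω ∂μ :=
    fun τ => hsnell.integral_exercisePayoff_le_integral hZ τ.2.1
  let τ_opt : {τ : Ω → ℕ∞ // IsStoppingTime 𝔽 τ ∧ ∀ ω, τ ω ≤ (T : ℕ∞) ∨ τ ω = ⊤} :=
    ⟨_, hsnell.isStoppingTime_optimalExerciseTime hadapted, optimalExerciseTime_le_or_eq_top⟩
  have h_opt : ∫ ω, exercisePayoff Z T τ_opt.1 ω ∂μ = ∫ ω, U 0 ω ∂μ :=
    (hsnell.integral_eq_integral_exercisePayoff_optimalExerciseTime hZ hadapted).symm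
  exact (IsGreatest.csSup_eq (s := range fun τ => ∫ ω, exercisePayoff Z T τ.1 ω ∂μ)
    ⟨⟨τ_opt, h_opt⟩, forall_mem_range.2 h_le⟩).symm

/-- The expected initial value of the backward dynamic-programming (Snell envelope)
recursion `U_T = max(Z_T, 0)`, `U_t = max(Z_t, E[U_{t+1} | ℱ_t])` equals the optimal
stopping value `sup_τ E[Z_τ · 1_{τ ≤ T}]`, the supremum being over all stopping times
`τ : Ω → {0,…,T} ∪ {∞}`, with payoff `0` on `{τ = ∞}`. -/
theorem snell_envelope_optimal_stopping
    {Ω : Type*} {m : MeasurableSpace Ω} (μ : Measure Ω) [IsProbabilityMeasure μ]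
    (T : ℕ) (hT : 0 < T) (𝔽 : Filtration ℕ m)
    (Z : ℕ → Ω → ℝ) (hadapted : Adapted 𝔽 Z) (hint : ∀ t, Integrable (Z t) μ)
    (U : ℕ → Ω → ℝ)
    (hUT : U T = fun ω => max (Z T ω) 0)
    (hU : ∀ t, t < T → U t = fun ω => max (Z t ω) ((μ[U (t + 1) | 𝔽 t]) ω)) :
    ∫ ω, U 0 ω ∂μ =
      ⨆ τ : {τ : Ω → ℕ∞ //
          (∀ n : ℕ, MeasurableSet[𝔽 n] {ω | τ ω ≤ (n : ℕ∞)}) ∧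
          ∀ ω, τ ω ≤ (T : ℕ∞) ∨ τ ω = ⊤},
        ∫ ω, Set.indicator {ω | τ.1 ω ≤ (T : ℕ∞)} (fun ω => Z (τ.1 ω).toNat ω) ω ∂μ :=
  snell_envelope_optimal_stopping_general μ T 𝔽 Z hadapted hint U hUT hU
end
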